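/- arXiv:2411.08475 — 2 statements merged into one kernel-verified Lean document; each statement's English description precedes it below -/
import Mathlib

section
/- Let r ≥ 4 be an integer and G a graph of odd order |G| ≤ 2r−1 in which every vertex has degree r except exactly one vertex of degree r−1 (a nearly r-regular graph). Then for every vertex v of G and every edge e of G, the graph G − v − e has a perfect matching. -/
/-!
Let `H` be `G` with `e` and all edges at `v` deleted. Every `u ≠ v` has `H`-degree at least
`r - 3`, and the defects `r - 1 - deg_H u` add up to at most `3` (one from `w`, two from the ends
of `e`). By the handshake lemma `r` is odd, so `r ≥ 5`.

Take a maximum matching `M` of `H` and suppose that it misses two vertices `x, y ≠ v` (by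
parity it cannot miss just one). Maximality rules out augmenting paths of length `1`, `3` and `5`
from `x` to `y`. Let `B` and `C` be the sets of `M`-partners of the neighbours of `x` and of `y`.
Then `B` avoids the neighbours of `y`, so `deg x + deg y ≤ |M| ≤ n - 3 ≤ 2r - 4`: the defects of
`x` and `y` add up to at least `2`, and every matched vertex but at most one has full degree
`r - 1`. A vertex of `B` has no neighbour in `C ∪ {v, y}` (and none in `B ∪ {x}` either if it
also lies in `C`); counting the neighbours of full-degree vertices of `B` and `C` against
`n ≤ 2r - 1` gives a contradiction.
-/

open SimpleGraph

/-- Number of edges of a graph. -/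
noncomputable def edgeCount {V : Type*} (G : SimpleGraph V) : ℕ := G.edgeSet.ncard

/-- Degree of a vertex. -/
noncomputable def deg {V : Type*} (G : SimpleGraph V) (v : V) : ℕ := (G.neighborSet v).ncard

/-- Maximum degree. -/
noncomputable def maxDeg {V : Type*} (G : SimpleGraph V) : ℕ := sSup (Set.range (deg G))

/-- Matching number: maximum size of a matching. -/
noncomputable def matchNum {V : Type*} (G : SimpleGraph V) : ℕ :=
  sSup {n | ∃ M : G.Subgraph, M.IsMatching ∧ M.edgeSet.ncard = n}

/-- `G` contains a copy of `H` (a subgraph isomorphic to `H`). -/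
def CopyIn {α β : Type*} (H : SimpleGraph α) (G : SimpleGraph β) : Prop :=
  ∃ f : H →g G, Function.Injective f

/-- The friendship graph `F_k`: `k` triangles sharing exactly one common vertex (vertex 0). -/
def friendship (k : ℕ) : SimpleGraph (Fin (2 * k + 1)) :=
  SimpleGraph.fromRel (fun a b => a.val = 0 ∨ b.val = 0 ∨ (a.val + 1) / 2 = (b.val + 1) / 2)

/-- The star `K_{1,m}` with center 0 and `m` leaves. -/
def starGraph (m : ℕ) : SimpleGraph (Fin (m + 1)) :=
  SimpleGraph.fromRel (fun a b => a.val = 0 ∨ b.val = 0)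

/-- The matching `mK_2` of `m` disjoint edges. -/
def matchGraph (m : ℕ) : SimpleGraph (Fin (2 * m)) :=
  SimpleGraph.fromRel (fun a b => a.val / 2 = b.val / 2)

/-- Turán number: max edges of an `n`-vertex graph with no copy of `H`. -/
noncomputable def exNum (n : ℕ) {α : Type*} (H : SimpleGraph α) : ℕ :=
  sSup {m | ∃ G : SimpleGraph (Fin n), ¬ CopyIn H G ∧ edgeCount G = m}

/-- `f(ν, Δ)`: max edges of a graph with matching number ≤ ν and max degree ≤ Δ. -/
noncomputable def fMax (ν Δ : ℕ) : ℕ :=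
  sSup {m | ∃ (n : ℕ) (G : SimpleGraph (Fin n)),
    matchNum G ≤ ν ∧ (∀ v, deg G v ≤ Δ) ∧ edgeCount G = m}

/-- A surjective edge-coloring of `K_n` using exactly `r` colors `0, …, r-1`. -/
def IsSurjColoring (n r : ℕ) (c : Sym2 (Fin n) → ℕ) : Prop :=
  (∀ e : Sym2 (Fin n), ¬ e.IsDiag → c e < r) ∧
  ∀ i < r, ∃ e : Sym2 (Fin n), ¬ e.IsDiag ∧ c e = i

/-- The colored `K_n` contains a rainbow copy of `H`. -/
def RainbowCopy {α : Type*} {n : ℕ} (c : Sym2 (Fin n) → ℕ) (H : SimpleGraph α) : Prop :=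
  ∃ f : H →g (⊤ : SimpleGraph (Fin n)), Function.Injective f ∧
    Set.InjOn (fun e => c (Sym2.map (⇑f) e)) H.edgeSet

/-- Anti-Ramsey number for the pair `{K_{1,k+1}, (k+1)K_2}`. -/
noncomputable def arPair (n k : ℕ) : ℕ :=
  sInf {r | ∀ c : Sym2 (Fin n) → ℕ, IsSurjColoring n r c →
    RainbowCopy c (_root_.starGraph (k + 1)) ∨ RainbowCopy c (matchGraph (k + 1))}

/-- Anti-Ramsey number of the friendship graph `F_k`. -/
noncomputable def arFriend (n k : ℕ) : ℕ :=
  sInf {r | ∀ c : Sym2 (Fin n) → ℕ, IsSurjColoring n r c → RainbowCopy c (friendship k)}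

/-- Anti-Ramsey number of a general graph `G`. -/
noncomputable def arGraph (n : ℕ) {α : Type*} (G : SimpleGraph α) : ℕ :=
  sInf {r | ∀ c : Sym2 (Fin n) → ℕ, IsSurjColoring n r c → RainbowCopy c G}

/-- Turán number of the family `{G − e : e ∈ E(G)}`. -/
noncomputable def exFamDel (n : ℕ) {α : Type*} (G : SimpleGraph α) : ℕ :=
  sSup {m | ∃ H : SimpleGraph (Fin n),
    (∀ e ∈ G.edgeSet, ¬ CopyIn (G.deleteEdges {e}) H) ∧ edgeCount H = m}

theorem Set.ncard_add_ncard_le_of_disjoint {α : Type*} [Finite α] {s t : Set α}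
    (h : Disjoint s t) : s.ncard + t.ncard ≤ Nat.card α :=
  Set.ncard_union_eq h ▸ Set.ncard_le_card _

theorem Finset.exists_mem_eq_zero_of_sum_le {α : Type*} [DecidableEq α] {f : α → ℕ}
    {T : Finset α} {x y : α} (hx : x ∈ T) (hy : y ∈ T) (hxy : x ≠ y)
    (hsum : ∑ u ∈ T, f u ≤ f x + f y + 1) {s : Set α} (hsT : ∀ u ∈ s, u ∈ T ∧ u ≠ x ∧ u ≠ y)
    (hs : 1 < s.ncard) : ∃ u ∈ s, f u = 0 := by
  obtain ⟨u₁, u₂, hu₁, hu₂, hne⟩ :=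
    (Set.one_lt_ncard_iff (Set.finite_of_ncard_pos (by omega))).mp hs
  obtain ⟨hu₁T, hu₁x, hu₁y⟩ := hsT u₁ hu₁
  obtain ⟨hu₂T, hu₂x, hu₂y⟩ := hsT u₂ hu₂
  by_contra! hpos
  have hsub : ({x, y, u₁, u₂} : Finset α) ⊆ T := by
    simp [Finset.insert_subset_iff, hx, hy, hu₁T, hu₂T]
  have := (Finset.sum_le_sum_of_subset hsub).trans hsum
  rw [Finset.sum_insert (by simp [hxy, hu₁x.symm, hu₂x.symm]),
    Finset.sum_insert (by simp [hu₁y.symm, hu₂y.symm]), Finset.sum_pair hne] at this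
  have := hpos u₁ hu₁
  have := hpos u₂ hu₂
  omega

namespace SimpleGraph.Subgraph

variable {V : Type*} {H : SimpleGraph V} {M : H.Subgraph} {a b c d u w x y : V}

def IsMaximumMatching (M : H.Subgraph) : Prop :=
  M.IsMatching ∧ ∀ N : H.Subgraph, N.IsMatching → N.verts.ncard ≤ M.verts.ncard

theorem exists_isMaximumMatching [Finite V] (H : SimpleGraph V) :
    ∃ M : H.Subgraph, M.IsMaximumMatching := by
  obtain ⟨M, hM, hmax⟩ := Set.exists_max_image {N : H.Subgraph | N.IsMatching}
    (fun N => N.verts.ncard) (Set.toFinite _) ⟨⊥, fun _ h => h.elim⟩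
  exact ⟨M, hM, hmax⟩

theorem IsMatching.notMem_verts (hM : M.IsMatching) (hx : ∀ t, ¬ H.Adj x t) :
    x ∉ M.verts := fun h => by
  obtain ⟨t, ht, -⟩ := hM h
  exact hx t (M.adj_sub ht)

theorem IsMatching.deleteVerts_pair (hM : M.IsMatching) (hab : M.Adj a b) :
    (M.deleteVerts {a, b}).IsMatching := by
  rintro u ⟨hu, hab'⟩
  obtain ⟨z, huz, huniq⟩ := hM hu
  have hz : z ∉ ({a, b} : Set V) := by
    rintro (rfl | rfl)
    · exact hab' (.inr (hM.eq_of_adj_right huz hab.symm))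
    · exact hab' (.inl (hM.eq_of_adj_right huz hab))
  exact ⟨z, deleteVerts_adj.mpr ⟨hu, hab', M.edge_vert huz.symm, hz, huz⟩,
    fun y hy => huniq y (deleteVerts_adj.mp hy).2.2.2.2⟩

theorem IsMatching.exists_swap (hM : M.IsMatching) (hx : x ∉ M.verts) (hxa : H.Adj x a)
    (hab : M.Adj a b) :
    ∃ N : H.Subgraph, N.IsMatching ∧ N.verts = insert x (M.verts \ {b}) ∧
      ∀ c d, M.Adj c d → c ≠ a → c ≠ b → N.Adj c d := by
  refine ⟨M.deleteVerts {a, b} ⊔ H.subgraphOfAdj hxa, ?_, ?_, ?_⟩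
  · refine (hM.deleteVerts_pair hab).sup (.subgraphOfAdj hxa) ?_
    rw [support_subgraphOfAdj, (hM.deleteVerts_pair hab).support_eq_verts, deleteVerts_verts]
    rintro s hs1 hs2 t ht
    obtain ⟨htM, htab⟩ := hs1 ht
    rcases hs2 ht with rfl | rfl
    · exact hx htM
    · exact htab (.inl rfl)
  · ext t
    simp only [verts_sup, deleteVerts_verts, subgraphOfAdj_verts, Set.mem_union, Set.mem_sdiff,
      Set.mem_insert_iff, Set.mem_singleton_iff]
    have ha : a ∈ M.verts := M.edge_vert hab
    constructor
    · rintro (⟨ht, htab⟩ | rfl | rfl)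
      · exact .inr ⟨ht, fun h => htab (.inr h)⟩
      · exact .inl rfl
      · exact .inr ⟨ha, hab.ne⟩
    · rintro (rfl | ⟨ht, htb⟩)
      · exact .inr (.inl rfl)
      · by_cases hta : t = a
        · exact .inr (.inr hta)
        · exact .inl ⟨ht, by rintro (h | h) <;> contradiction⟩
  · intro c d hcd hca hcb
    refine .inl (deleteVerts_adj.mpr ⟨M.edge_vert hcd, ?_, M.edge_vert hcd.symm, ?_, hcd⟩)
    · rintro (h | h) <;> contradiction
    · rintro (rfl | rfl)
      · exact hcb (hM.eq_of_adj_right hcd hab.symm)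
      · exact hca (hM.eq_of_adj_right hcd hab)

open scoped Classical in
/-- The vertex matched to `u`, or `u` itself when `u` is not matched. -/
noncomputable def partner (M : H.Subgraph) (u : V) : V :=
  if h : ∃ w, M.Adj u w then h.choose else u

theorem IsMatching.partner_eq (hM : M.IsMatching) (h : M.Adj u w) : M.partner u = w := by
  have hex : ∃ w, M.Adj u w := ⟨w, h⟩
  rw [partner, dif_pos hex]
  exact hM.eq_of_adj_left hex.choose_spec h

theorem IsMatching.adj_partner (hM : M.IsMatching) (hu : u ∈ M.verts) :
    M.Adj u (M.partner u) := by
  obtain ⟨w, h, -⟩ := hM hu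
  rwa [hM.partner_eq h]

theorem IsMatching.injOn_partner (hM : M.IsMatching) : Set.InjOn M.partner M.verts :=
  fun _ ha _ hb h => hM.eq_of_adj_right (hM.adj_partner ha) (h ▸ hM.adj_partner hb)

section

variable [Finite V]

theorem IsMaximumMatching.not_adj (hM : M.IsMaximumMatching) (hx : x ∉ M.verts)
    (hy : y ∉ M.verts) : ¬ H.Adj x y := by
  intro hxy
  have hdisj : Disjoint M.verts {x, y} := by
    rw [Set.disjoint_right]
    rintro t (rfl | rfl) <;> assumption
  have hN := hM.2 _ (hM.1.sup (.subgraphOfAdj hxy) (by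
    rwa [hM.1.support_eq_verts, support_subgraphOfAdj]))
  rw [verts_sup, subgraphOfAdj_verts, Set.ncard_union_eq hdisj, Set.ncard_pair hxy.ne] at hN
  omega

theorem IsMaximumMatching.neighborSet_subset (hM : M.IsMaximumMatching) (hx : x ∉ M.verts) :
    H.neighborSet x ⊆ M.verts := fun _ ht => by_contra fun h => hM.not_adj hx h ht

theorem IsMaximumMatching.exists_swap (hM : M.IsMaximumMatching) (hx : x ∉ M.verts)
    (hxa : H.Adj x a) (hab : M.Adj a b) :
    ∃ N : H.Subgraph, N.IsMaximumMatching ∧ N.verts = insert x (M.verts \ {b}) ∧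
      ∀ c d, M.Adj c d → c ≠ a → c ≠ b → N.Adj c d := by
  obtain ⟨N, hN, hNverts, hNadj⟩ := hM.1.exists_swap hx hxa hab
  refine ⟨N, ⟨hN, fun N' hN' => (hM.2 N' hN').trans_eq ?_⟩, hNverts, hNadj⟩
  have hb : b ∈ M.verts := M.edge_vert hab.symm
  rw [hNverts, Set.ncard_insert_of_notMem (fun h => hx h.1), Set.ncard_sdiff_singleton_add_one hb]

/-- `x - a = b - y` would be an augmenting path. -/
theorem IsMaximumMatching.not_adj_of_adj_of_adj (hM : M.IsMaximumMatching) (hx : x ∉ M.verts)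
    (hy : y ∉ M.verts) (hxy : x ≠ y) (hxa : H.Adj x a) (hab : M.Adj a b) : ¬ H.Adj b y := by
  obtain ⟨N, hN, hNverts, -⟩ := hM.exists_swap hx hxa hab
  have hb : b ∈ M.verts := M.edge_vert hab.symm
  refine hN.not_adj ?_ ?_
  · rw [hNverts]
    rintro (rfl | h)
    · exact hx hb
    · exact h.2 rfl
  · rw [hNverts]
    rintro (rfl | h)
    · exact hxy rfl
    · exact hy h.1

/-- `x - a = b - c = d - y` would be an augmenting path. -/
theorem IsMaximumMatching.not_adj_of_adj_of_adj_of_adj (hM : M.IsMaximumMatching)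
    (hx : x ∉ M.verts) (hy : y ∉ M.verts) (hxy : x ≠ y) (hxa : H.Adj x a) (hab : M.Adj a b)
    (hbc : H.Adj b c) (hcd : M.Adj c d) : ¬ H.Adj d y := by
  intro hdy
  by_cases hca : c = a
  · subst hca
    exact hM.not_adj_of_adj_of_adj hx hy hxy hxa hab (hM.1.eq_of_adj_left hab hcd ▸ hdy)
  obtain ⟨N, hN, hNverts, hNadj⟩ := hM.exists_swap hx hxa hab
  have hb : b ∉ N.verts := by
    rw [hNverts]
    rintro (rfl | h)
    · exact hx (M.edge_vert hab.symm)
    · exact h.2 rfl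
  have hyN : y ∉ N.verts := by
    rw [hNverts]
    rintro (rfl | h)
    · exact hxy rfl
    · exact hy h.1
  exact hN.not_adj_of_adj_of_adj hyN hb (fun h => hy (h ▸ M.edge_vert hab.symm)) hdy.symm
    (hNadj c d hcd hca hbc.ne.symm).symm hbc.symm

theorem IsMaximumMatching.ncard_image_partner (hM : M.IsMaximumMatching) (hx : x ∉ M.verts) :
    (M.partner '' H.neighborSet x).ncard = deg H x :=
  (hM.1.injOn_partner.mono (hM.neighborSet_subset hx)).ncard_image

theorem IsMaximumMatching.image_partner_subset (hM : M.IsMaximumMatching) (hx : x ∉ M.verts) :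
    M.partner '' H.neighborSet x ⊆ M.verts := by
  rintro _ ⟨a, ha, rfl⟩
  exact M.edge_vert (hM.1.adj_partner (hM.neighborSet_subset hx ha)).symm

theorem IsMaximumMatching.deg_add_deg_le (hM : M.IsMaximumMatching) (hx : x ∉ M.verts)
    (hy : y ∉ M.verts) (hxy : x ≠ y) : deg H x + deg H y ≤ M.verts.ncard := by
  have hdisj : Disjoint (M.partner '' H.neighborSet x) (H.neighborSet y) := by
    rw [Set.disjoint_left]
    rintro _ ⟨a, ha, rfl⟩ hay
    exact hM.not_adj_of_adj_of_adj hx hy hxy ha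
      (hM.1.adj_partner (hM.neighborSet_subset hx ha)) hay.symm
  rw [← hM.ncard_image_partner hx, deg, ← Set.ncard_union_eq hdisj]
  exact Set.ncard_le_ncard (Set.union_subset (hM.image_partner_subset hx)
    (hM.neighborSet_subset hy))

theorem IsMaximumMatching.disjoint_neighborSet_image_partner (hM : M.IsMaximumMatching)
    (hx : x ∉ M.verts) (hy : y ∉ M.verts) (hxy : x ≠ y) (hu : u ∈ M.partner '' H.neighborSet x) :
    Disjoint (H.neighborSet u) (insert y (M.partner '' H.neighborSet y)) := by
  obtain ⟨a, ha, rfl⟩ := hu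
  have hau := hM.1.adj_partner (hM.neighborSet_subset hx ha)
  rw [Set.disjoint_right]
  rintro _ (rfl | ⟨z, hz, rfl⟩) ht
  · exact hM.not_adj_of_adj_of_adj hx hy hxy ha hau ht
  · exact hM.not_adj_of_adj_of_adj_of_adj hx hy hxy ha hau ht
      (hM.1.adj_partner (hM.neighborSet_subset hy hz)).symm (H.adj_symm hz)

end

section

variable [Fintype V] {u' v : V}

theorem IsMatching.exists_ne_notMem (hM : M.IsMatching)
    (hodd : Odd (Fintype.card V)) (hvM : v ∉ M.verts) (hxv : x ≠ v) (hx : x ∉ M.verts) :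
    ∃ y, y ≠ v ∧ y ∉ M.verts ∧ y ≠ x := by
  classical
  have heven : Even M.verts.ncard := by
    rw [Set.ncard_eq_toFinset_card']
    exact hM.even_card
  have hcompl := Set.ncard_add_ncard_compl (insert v M.verts)
  rw [Set.ncard_insert_of_notMem hvM, Nat.card_eq_fintype_card] at hcompl
  have hxE : x ∈ (insert v M.verts)ᶜ := by simp [hxv, hx]
  have hpos := (Set.ncard_pos (Set.toFinite _)).mpr ⟨x, hxE⟩
  obtain ⟨y, hyE, hyx⟩ := Set.exists_ne_of_one_lt_ncard (s := (insert v M.verts)ᶜ)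
    (by rcases hodd with ⟨k, hk⟩; rcases heven with ⟨l, hl⟩; omega) x
  simp only [Set.mem_compl_iff, Set.mem_insert_iff, not_or] at hyE
  exact ⟨y, hyE.1, hyE.2, hyx⟩

theorem IsMaximumMatching.deg_add_ncard_add_three_le
    (hM : M.IsMaximumMatching) (hv : ∀ t, ¬ H.Adj v t) (hx : x ∉ M.verts) (hy : y ∉ M.verts)
    (hxy : x ≠ y) (hyv : y ≠ v) (hu : u ∈ M.partner '' H.neighborSet x)
    (huy : u ∉ M.partner '' H.neighborSet y) :
    deg H u + (M.partner '' H.neighborSet y).ncard + 3 ≤ Fintype.card V := by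
  have huM := hM.image_partner_subset hx hu
  have hvM := hM.1.notMem_verts hv
  have hCM := hM.image_partner_subset hy
  have hdisj : Disjoint (H.neighborSet u)
      (insert v (insert u (insert y (M.partner '' H.neighborSet y)))) := by
    refine Set.disjoint_insert_right.mpr ⟨fun h => hv u (H.adj_symm h),
      Set.disjoint_insert_right.mpr ⟨H.irrefl, ?_⟩⟩
    exact hM.disjoint_neighborSet_image_partner hx hy hxy hu
  have := Set.ncard_add_ncard_le_of_disjoint hdisj
  rw [Set.ncard_insert_of_notMem, Set.ncard_insert_of_notMem, Set.ncard_insert_of_notMem,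
    Nat.card_eq_fintype_card] at this
  · unfold deg; omega
  · exact fun h => hy (hCM h)
  · rintro (rfl | h)
    · exact hy huM
    · exact huy h
  · rintro (rfl | rfl | h)
    · exact hvM huM
    · exact hyv rfl
    · exact hvM (hCM h)

theorem IsMaximumMatching.deg_add_ncard_union_add_three_le
    (hM : M.IsMaximumMatching) (hv : ∀ t, ¬ H.Adj v t) (hx : x ∉ M.verts) (hy : y ∉ M.verts)
    (hxy : x ≠ y) (hxv : x ≠ v) (hyv : y ≠ v) (hux : u ∈ M.partner '' H.neighborSet x)
    (huy : u ∈ M.partner '' H.neighborSet y) :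
    deg H u + (M.partner '' H.neighborSet x ∪ M.partner '' H.neighborSet y).ncard + 3
      ≤ Fintype.card V := by
  have hvM := hM.1.notMem_verts hv
  have hBCM := Set.union_subset (hM.image_partner_subset hx) (hM.image_partner_subset hy)
  have hdisj : Disjoint (H.neighborSet u) (insert v (insert x (insert y
      (M.partner '' H.neighborSet x ∪ M.partner '' H.neighborSet y)))) := by
    have hBx := hM.disjoint_neighborSet_image_partner hy hx hxy.symm huy
    have hCy := hM.disjoint_neighborSet_image_partner hx hy hxy hux
    simp only [Set.disjoint_insert_right, Set.disjoint_union_right] at hBx hCy ⊢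
    exact ⟨fun h => hv u (H.adj_symm h), hBx.1, hCy.1, hBx.2, hCy.2⟩
  have := Set.ncard_add_ncard_le_of_disjoint hdisj
  rw [Set.ncard_insert_of_notMem, Set.ncard_insert_of_notMem, Set.ncard_insert_of_notMem,
    Nat.card_eq_fintype_card] at this
  · unfold deg; omega
  · exact fun h => hy (hBCM h)
  · rintro (rfl | h)
    · exact hxy rfl
    · exact hx (hBCM h)
  · rintro (rfl | rfl | h)
    · exact hxv rfl
    · exact hyv rfl
    · exact hvM (hBCM h)

theorem IsMaximumMatching.two_mul_add_deg_add_deg_add_six_le (hM : M.IsMaximumMatching)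
    (hv : ∀ t, ¬ H.Adj v t) (hx : x ∉ M.verts) (hy : y ∉ M.verts) (hxy : x ≠ y) (hxv : x ≠ v)
    (hyv : y ≠ v) (hu : u ∈ M.partner '' H.neighborSet x) (hu' : u' ∈ M.partner '' H.neighborSet y)
    {d : ℕ} (hdu : d ≤ deg H u) (hdu' : d ≤ deg H u') :
    2 * d + deg H x + deg H y + 6 ≤ 2 * Fintype.card V := by
  have hB := hM.ncard_image_partner hx
  have hC := hM.ncard_image_partner hy
  have hBC := Set.ncard_le_ncard (Set.subset_union_left (s := M.partner '' H.neighborSet x)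
    (t := M.partner '' H.neighborSet y))
  have hCB := Set.ncard_le_ncard (Set.subset_union_right (s := M.partner '' H.neighborSet x)
    (t := M.partner '' H.neighborSet y))
  by_cases huC : u ∈ M.partner '' H.neighborSet y
  · have := hM.deg_add_ncard_union_add_three_le hv hx hy hxy hxv hyv hu huC
    omega
  by_cases hu'B : u' ∈ M.partner '' H.neighborSet x
  · have := hM.deg_add_ncard_union_add_three_le hv hx hy hxy hxv hyv hu'B hu'
    omega
  have := hM.deg_add_ncard_add_three_le hv hx hy hxy hyv hu huC
  have := hM.deg_add_ncard_add_three_le hv hy hx hxy.symm hxv hu' hu'B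
  omega

end

end SimpleGraph.Subgraph

open SimpleGraph.Subgraph

theorem exists_isMatching_verts_eq_of_sum_defect_le_three {V : Type*} [Fintype V]
    [DecidableEq V] {H : SimpleGraph V} {v : V} (hv : ∀ t, ¬ H.Adj v t) {r : ℕ} (hr : 5 ≤ r)
    (hodd : Odd (Fintype.card V)) (hcard : Fintype.card V ≤ 2 * r - 1)
    (hdeg : ∀ u ≠ v, r ≤ deg H u + 3)
    (hdefect : ∑ u ∈ Finset.univ.erase v, (r - 1 - deg H u) ≤ 3) :
    ∃ M : H.Subgraph, M.IsMatching ∧ M.verts = {u | u ≠ v} := by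
  obtain ⟨M, hM⟩ := exists_isMaximumMatching H
  have hvM := hM.1.notMem_verts hv
  refine ⟨M, hM.1, Set.Subset.antisymm (fun u hu => ne_of_mem_of_not_mem hu hvM) ?_⟩
  by_contra hcov
  obtain ⟨x, hxv, hx⟩ : ∃ x, x ≠ v ∧ x ∉ M.verts := by simpa [Set.not_subset] using hcov
  obtain ⟨y, hyv, hy, hyx⟩ := hM.1.exists_ne_notMem hodd hvM hxv hx
  have hxy := hyx.symm
  have hMcard : M.verts.ncard + 3 ≤ Fintype.card V := by
    have hdisj : Disjoint M.verts {v, x, y} := by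
      rw [Set.disjoint_right]
      rintro t (rfl | rfl | rfl) <;> assumption
    have := Set.ncard_add_ncard_le_of_disjoint hdisj
    rwa [Set.ncard_eq_three.mpr ⟨v, x, y, hxv.symm, hyv.symm, hxy, rfl⟩,
      Nat.card_eq_fintype_card] at this
  have hdxy := hM.deg_add_deg_le hx hy hxy
  have hdefect_xy : (r - 1 - deg H x) + (r - 1 - deg H y) ≤ 3 := by
    refine le_trans ?_ hdefect
    rw [← Finset.sum_pair (f := fun u => r - 1 - deg H u) hxy]
    exact Finset.sum_le_sum_of_subset (by simp [Finset.insert_subset_iff, hxv, hyv])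
  -- `x` and `y` carry defect at least two between them, so at most one matched vertex has any
  have hfull : ∀ z ∉ M.verts, 1 < deg H z →
      ∃ u ∈ M.partner '' H.neighborSet z, r - 1 ≤ deg H u := by
    intro z hz hz1
    obtain ⟨u, hu, hu0⟩ := Finset.exists_mem_eq_zero_of_sum_le (f := fun u => r - 1 - deg H u)
      (Finset.mem_erase.mpr ⟨hxv, Finset.mem_univ x⟩)
      (Finset.mem_erase.mpr ⟨hyv, Finset.mem_univ y⟩) hxy (by omega)
      (fun u hu => by
        have huM := hM.image_partner_subset hz hu
        exact ⟨Finset.mem_erase.mpr ⟨ne_of_mem_of_not_mem huM hvM, Finset.mem_univ u⟩,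
          ne_of_mem_of_not_mem huM hx, ne_of_mem_of_not_mem huM hy⟩)
      (by rwa [hM.ncard_image_partner hz])
    exact ⟨u, hu, by omega⟩
  obtain ⟨u, hu, hdu⟩ := hfull x hx (by have := hdeg x hxv; omega)
  obtain ⟨u', hu', hdu'⟩ := hfull y hy (by have := hdeg y hyv; omega)
  have := hM.two_mul_add_deg_add_deg_add_six_le hv hx hy hxy hxv hyv hu hu' hdu hdu'
  omega

section

variable {V : Type*} {G : SimpleGraph V}

theorem deg_eq_degree [Fintype V] [DecidableRel G.Adj] (u : V) : deg G u = G.degree u := by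
  rw [deg, ← card_neighborSet_eq_degree, Set.ncard_eq_toFinset_card', Set.toFinset_card]

theorem odd_of_deg_eq_sub_one [Fintype V] {r : ℕ} (hr : r ≠ 0) {w : V} (hw : deg G w = r - 1)
    (hreg : ∀ u ≠ w, deg G u = r) : Odd r := by
  classical
  by_contra hodd
  rw [Nat.not_odd_iff_even] at hodd
  have hodd_deg : ({u | Odd (G.degree u)} : Finset V) = {w} := by
    ext u
    simp only [Finset.mem_filter, Finset.mem_univ, true_and, Finset.mem_singleton,
      ← deg_eq_degree]
    by_cases huw : u = w
    · subst huw
      simp only [hw, iff_true]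
      exact Nat.Even.sub_odd (by omega) hodd odd_one
    · simp [hreg u huw, huw, Nat.not_odd_iff_even.mpr hodd]
  have := G.even_card_odd_degree_vertices
  rw [hodd_deg, Finset.card_singleton] at this
  exact Nat.not_even_one this

theorem deg_le_deg_deleteIncidenceSet_add_one [Finite V] {u v : V} (huv : u ≠ v) :
    deg G u ≤ deg (G.deleteIncidenceSet v) u + 1 := by
  have hsub : G.neighborSet u \ {v} ⊆ (G.deleteIncidenceSet v).neighborSet u :=
    fun t ⟨ht, htv⟩ => deleteIncidenceSet_adj.mpr ⟨ht, huv, htv⟩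
  calc deg G u ≤ (G.neighborSet u \ {v}).ncard + ({v} : Set V).ncard :=
        Set.ncard_le_ncard_sdiff_add_ncard _ _
    _ ≤ deg (G.deleteIncidenceSet v) u + 1 := by
        rw [Set.ncard_singleton]
        exact Nat.add_le_add_right (Set.ncard_le_ncard hsub) 1

theorem deg_le_deg_deleteEdges_singleton_add [Finite V] [DecidableEq V] (e : Sym2 V) (u : V) :
    deg G u ≤ deg (G.deleteEdges {e}) u + if u ∈ e then 1 else 0 := by
  split_ifs with hu
  · have hsub : G.neighborSet u \ {Sym2.Mem.other hu} ⊆ (G.deleteEdges {e}).neighborSet u := by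
      refine fun t ⟨ht, hto⟩ => deleteEdges_adj.mpr ⟨ht, fun h => hto ?_⟩
      rw [Set.mem_singleton_iff, ← Sym2.other_spec hu, Sym2.congr_right] at h
      exact h
    calc deg G u ≤ (G.neighborSet u \ {Sym2.Mem.other hu}).ncard + 1 := by
          rw [← Set.ncard_singleton (Sym2.Mem.other hu)]
          exact Set.ncard_le_ncard_sdiff_add_ncard _ _
      _ ≤ deg (G.deleteEdges {e}) u + 1 := Nat.add_le_add_right (Set.ncard_le_ncard hsub) 1
  · refine Set.ncard_le_ncard fun t ht => deleteEdges_adj.mpr ⟨ht, fun h => hu ?_⟩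
    rw [Set.mem_singleton_iff] at h
    exact h ▸ Sym2.mem_mk_left u t

theorem Sym2.sum_ite_mem_le_two [Fintype V] [DecidableEq V] (e : Sym2 V) :
    ∑ u, (if u ∈ e then 1 else 0) ≤ 2 := by
  simp_rw [← Sym2.mem_toFinset, Finset.sum_boole, Finset.filter_mem_eq_inter, Finset.univ_inter,
    Nat.cast_id, Sym2.card_toFinset]
  split_ifs <;> omega

variable {r : ℕ} {w : V}

theorem sub_one_sub_deg_deleteIncidenceSet_deleteEdges_le [Finite V] [DecidableEq V]
    (hw : deg G w = r - 1) (hreg : ∀ u ≠ w, deg G u = r) (e : Sym2 V) {u v : V} (huv : u ≠ v) :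
    r - 1 - deg ((G.deleteEdges {e}).deleteIncidenceSet v) u ≤
      (if u = w then 1 else 0) + (if u ∈ e then 1 else 0) := by
  have hv := deg_le_deg_deleteIncidenceSet_add_one (G := G.deleteEdges {e}) huv
  have he := deg_le_deg_deleteEdges_singleton_add (G := G) e u
  have hG : r ≤ deg G u + if u = w then 1 else 0 := by
    split_ifs with huw
    · rw [huw, hw]; omega
    · rw [hreg u huw]; omega
  split_ifs at * <;> omega

theorem sum_sub_one_sub_deg_deleteIncidenceSet_deleteEdges_le [Fintype V] [DecidableEq V]
    (hw : deg G w = r - 1) (hreg : ∀ u ≠ w, deg G u = r) (e : Sym2 V) (v : V) :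
    ∑ u ∈ Finset.univ.erase v, (r - 1 - deg ((G.deleteEdges {e}).deleteIncidenceSet v) u) ≤ 3 :=
  calc
    _ ≤ ∑ u ∈ Finset.univ.erase v, ((if u = w then 1 else 0) + (if u ∈ e then 1 else 0)) :=
      Finset.sum_le_sum fun u hu =>
        sub_one_sub_deg_deleteIncidenceSet_deleteEdges_le hw hreg e (Finset.ne_of_mem_erase hu)
    _ ≤ ∑ u, ((if u = w then 1 else 0) + (if u ∈ e then 1 else 0)) :=
      Finset.sum_le_sum_of_subset (Finset.erase_subset _ _)
    _ ≤ 3 := by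
      have := e.sum_ite_mem_le_two
      simp only [Finset.sum_add_distrib, Finset.sum_ite_eq', Finset.mem_univ, if_true]
      omega

end

theorem stmt4_general {V : Type*} [Fintype V] (r : ℕ) (hr : 4 ≤ r) (G : SimpleGraph V)
    (hodd : Odd (Fintype.card V)) (hcard : Fintype.card V ≤ 2 * r - 1)
    (w : V) (hw : deg G w = r - 1) (hreg : ∀ u, u ≠ w → deg G u = r)
    (v : V) (e : Sym2 V) :
    ∃ M : G.Subgraph, M.IsMatching ∧ M.verts = {u | u ≠ v} ∧ e ∉ M.edgeSet := by
  classical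
  have hr5 : 5 ≤ r := by
    obtain ⟨k, rfl⟩ := odd_of_deg_eq_sub_one (by omega) hw hreg
    omega
  have hdeg : ∀ u ≠ v, r ≤ deg ((G.deleteEdges {e}).deleteIncidenceSet v) u + 3 := fun u hu => by
    have := sub_one_sub_deg_deleteIncidenceSet_deleteEdges_le hw hreg e hu
    split_ifs at this <;> omega
  obtain ⟨M, hM, hMverts⟩ := exists_isMatching_verts_eq_of_sum_defect_le_three
    (fun t h => (deleteIncidenceSet_adj.mp h).2.1 rfl) hr5 hodd hcard hdeg
    (sum_sub_one_sub_deg_deleteIncidenceSet_deleteEdges_le hw hreg e v)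
  have hHG : (G.deleteEdges {e}).deleteIncidenceSet v ≤ G :=
    (deleteIncidenceSet_le _ _).trans (deleteEdges_le _)
  refine ⟨M.map (Hom.ofLE hHG), hM.map_ofLE hHG, by simpa using hMverts, fun he => ?_⟩
  simp only [Subgraph.edgeSet_map, Hom.coe_ofLE, Sym2.map_id, Set.image_id] at he
  have heH := edgeSet_mono (deleteIncidenceSet_le _ v) (M.edgeSet_subset he)
  rw [edgeSet_deleteEdges] at heH
  exact heH.2 rfl

/-- In a nearly `r`-regular graph of odd order at most `2r-1` (`r ≥ 4`), deleting any
vertex `v` and any edge `e` leaves a graph with a perfect matching. -/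
theorem stmt4 {V : Type*} [Fintype V] (r : ℕ) (hr : 4 ≤ r) (G : SimpleGraph V)
    (hodd : Odd (Fintype.card V)) (hcard : Fintype.card V ≤ 2 * r - 1)
    (w : V) (hw : deg G w = r - 1) (hreg : ∀ u, u ≠ w → deg G u = r)
    (v : V) (e : Sym2 V) (he : e ∈ G.edgeSet) :
    ∃ M : G.Subgraph, M.IsMatching ∧ M.verts = {u | u ≠ v} ∧ e ∉ M.edgeSet :=
  stmt4_general r hr G hodd hcard w hw hreg v e
end

section
/- For any graph H with Gallai–Edmonds decomposition (D, A, C): if every component of H[D] is factor-critical with orders c₁,…,c_t, H[C] has a perfect matching, and every maximum matching matches A into distinct components of D, then ν(H) = |A| + |C|/2 + Σᵢ (cᵢ − 1)/2. -/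
open SimpleGraph

/-!
Write `t` for the number of components of `H[D]`, so that `Σᵢ (cᵢ - 1)/2` is `(|D| - t)/2`; the
formula then amounts to `2ν(H) + t = 2|A| + |C| + |D|`. For `≥`, take a perfect matching of `C`,
the edges of a maximum matching joining `A` to `D`, and in each component of `H[D]` a
near-perfect matching avoiding the vertex matched to `A` (an arbitrary vertex if there is none):
this leaves exactly one vertex uncovered in each of the `t - |A|` components not reached from `A`.
For `≤`, the easy half of Tutte–Berge: every component of `H[D]` is odd and has all its outside
neighbours in `A`, so under any matching it contains an uncovered vertex or a vertex matched
into `A`; hence at least `t - |A|` vertices stay uncovered.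
-/

theorem Set.ncard_add_ncard_sdiff_add_ncard {α : Type*} [Finite α] {s t : Set α}
    (hst : Disjoint s t) : s.ncard + ((Set.univ \ t) \ s).ncard + t.ncard = Nat.card α := by
  have hs := Set.ncard_sdiff_add_ncard_of_subset (s := s) (t := Set.univ \ t)
    fun a ha => ⟨trivial, Set.disjoint_left.mp hst ha⟩
  have ht := Set.ncard_sdiff_add_ncard_of_subset (Set.subset_univ t)
  rw [Set.ncard_univ] at ht
  omega

namespace SimpleGraph

variable {V : Type*} {G : SimpleGraph V}

theorem Subgraph.IsMatching.ncard_verts [Finite V] {M : G.Subgraph} (hM : M.IsMatching) :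
    M.verts.ncard = 2 * M.edgeSet.ncard := by
  classical
  have := Fintype.ofFinite V
  have hdeg : ∀ v : M.verts, M.coe.degree v = 1 := fun v => by
    rw [Subgraph.coe_degree, Subgraph.degree_eq_one_iff_existsUnique_adj]
    exact hM v.2
  calc M.verts.ncard = ∑ v : M.verts, M.coe.degree v := by
        simp [hdeg, ← Nat.card_coe_set_eq]
    _ = 2 * M.coe.edgeSet.ncard := by
        rw [Set.ncard_eq_toFinset_card']
        convert M.coe.sum_degrees_eq_twice_card_edges using 3
        ext; simp
    _ = 2 * M.edgeSet.ncard := by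
        rw [← M.image_coe_edgeSet_coe,
          Set.ncard_image_of_injective _ (Sym2.map.injective Subtype.val_injective)]

theorem bddAbove_matching_sizes [Finite V] (G : SimpleGraph V) :
    BddAbove {n | ∃ M : G.Subgraph, M.IsMatching ∧ M.edgeSet.ncard = n} := by
  refine ⟨Nat.card (Sym2 V), ?_⟩
  rintro n ⟨M, -, rfl⟩
  rw [← Set.ncard_univ]
  exact Set.ncard_le_ncard (Set.subset_univ _)

theorem exists_isMatching_ncard_edgeSet_eq_matchNum [Finite V] (G : SimpleGraph V) :
    ∃ M : G.Subgraph, M.IsMatching ∧ M.edgeSet.ncard = matchNum G := by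
  have hempty : 0 ∈ {n | ∃ M : G.Subgraph, M.IsMatching ∧ M.edgeSet.ncard = n} :=
    ⟨⊥, fun _ hv => hv.elim, by simp⟩
  exact Nat.sSup_mem ⟨0, hempty⟩ G.bddAbove_matching_sizes

theorem Subgraph.IsMatching.ncard_edgeSet_le_matchNum [Finite V] {M : G.Subgraph}
    (hM : M.IsMatching) : M.edgeSet.ncard ≤ matchNum G :=
  le_csSup G.bddAbove_matching_sizes ⟨M, hM, rfl⟩

def PerfectlyMatchable (G : SimpleGraph V) (S : Set V) : Prop :=
  ∃ M : G.Subgraph, M.IsMatching ∧ M.verts = S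

namespace PerfectlyMatchable

variable {S T : Set V}

theorem ncard_le_two_mul_matchNum [Finite V] (h : G.PerfectlyMatchable S) :
    S.ncard ≤ 2 * matchNum G := by
  obtain ⟨M, hM, rfl⟩ := h
  rw [hM.ncard_verts]
  exact Nat.mul_le_mul_left 2 hM.ncard_edgeSet_le_matchNum

theorem even_ncard [Finite V] (h : G.PerfectlyMatchable S) : Even S.ncard := by
  obtain ⟨M, hM, rfl⟩ := h
  exact ⟨M.edgeSet.ncard, by rw [hM.ncard_verts, two_mul]⟩

theorem odd_ncard_of_sdiff_singleton [Finite V] {v : V} (hv : v ∈ S)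
    (h : G.PerfectlyMatchable (S \ {v})) : Odd S.ncard := by
  obtain ⟨k, hk⟩ := h.even_ncard
  exact ⟨k, by rw [← Set.ncard_sdiff_singleton_add_one hv, hk, two_mul]⟩

theorem union (hS : G.PerfectlyMatchable S) (hT : G.PerfectlyMatchable T)
    (hST : Disjoint S T) : G.PerfectlyMatchable (S ∪ T) := by
  obtain ⟨M, hM, rfl⟩ := hS
  obtain ⟨N, hN, rfl⟩ := hT
  refine ⟨M ⊔ N, hM.sup hN ?_, rfl⟩
  rwa [hM.support_eq_verts, hN.support_eq_verts]

theorem iUnion {ι : Type*} {S : ι → Set V} (h : ∀ i, G.PerfectlyMatchable (S i))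
    (hS : Pairwise fun i j => Disjoint (S i) (S j)) : G.PerfectlyMatchable (⋃ i, S i) := by
  choose M hM hMS using h
  refine ⟨⨆ i, M i, Subgraph.IsMatching.iSup hM fun i j hij => ?_, ?_⟩
  · simpa only [(hM _).support_eq_verts, hMS] using hS hij
  · simp [hMS]

theorem image_val {s : Set V} {T : Set s} (h : (G.induce s).PerfectlyMatchable T) :
    G.PerfectlyMatchable (Subtype.val '' T) := by
  obtain ⟨M, hM, rfl⟩ := h
  exact ⟨M.map (Embedding.induce s).toHom, hM.map _ Subtype.val_injective, rfl⟩

end PerfectlyMatchable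

theorem perfectlyMatchable_union_range {s : Set V} {f : s → V} (hf : Function.Injective f)
    (hsf : Disjoint s (Set.range f)) (hadj : ∀ a : s, G.Adj a (f a)) :
    G.PerfectlyMatchable (s ∪ Set.range f) := by
  have hpairs : s ∪ Set.range f = ⋃ a : s, {(a : V), f a} := by
    ext x
    simp only [Set.mem_union, Set.mem_range, Set.mem_iUnion, Set.mem_insert_iff,
      Set.mem_singleton_iff]
    constructor
    · rintro (hx | ⟨a, rfl⟩)
      exacts [⟨⟨x, hx⟩, Or.inl rfl⟩, ⟨a, Or.inr rfl⟩]
    · rintro ⟨a, rfl | rfl⟩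
      exacts [Or.inl a.2, Or.inr ⟨a, rfl⟩]
  rw [hpairs]
  refine PerfectlyMatchable.iUnion (fun a => ⟨G.subgraphOfAdj (hadj a),
    Subgraph.IsMatching.subgraphOfAdj _, rfl⟩) fun a b hab => ?_
  have hfs : ∀ a b : s, f a ≠ b := fun a b h =>
    Set.disjoint_left.mp hsf b.2 ⟨a, h⟩
  simp only [Set.disjoint_insert_left, Set.disjoint_insert_right,
    Set.disjoint_singleton, Set.mem_insert_iff, Set.mem_singleton_iff, ne_eq]
  grind [Subtype.val_injective, hf.ne hab]

theorem Subgraph.IsMatching.even_ncard_of_forall_adj_mem [Finite V] {M : G.Subgraph}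
    (hM : M.IsMatching) {S : Set V} (hSM : S ⊆ M.verts)
    (hS : ∀ u ∈ S, ∀ w, M.Adj u w → w ∈ S) : Even S.ncard := by
  refine PerfectlyMatchable.even_ncard ⟨M.induce S, fun u hu => ?_, rfl⟩
  obtain ⟨w, huw, hw⟩ := hM (hSM hu)
  exact ⟨w, ⟨hu, hS u hu w huw, huw⟩, fun y hy => hw y hy.2.2⟩

theorem card_connectedComponent_le [Finite V] (G : SimpleGraph V) :
    Nat.card G.ConnectedComponent ≤ Nat.card V :=
  Nat.card_le_card_of_surjective _ fun K => K.nonempty_supp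

theorem exists_perfectlyMatchable_compl {ι : Type*}
    (hfc : ∀ K : G.ConnectedComponent, ∀ v ∈ K.supp, G.PerfectlyMatchable (K.supp \ {v}))
    {p : ι → V} (hp : Function.Injective (G.connectedComponentMk ∘ p)) :
    ∃ R : Set V, Set.range p ⊆ R ∧ R.ncard = Nat.card G.ConnectedComponent ∧
      G.PerfectlyMatchable Rᶜ := by
  let r := Function.extend (G.connectedComponentMk ∘ p) p Quot.out
  have hrp : ∀ i, r (G.connectedComponentMk (p i)) = p i := hp.extend_apply p Quot.out
  have hr : ∀ K, G.connectedComponentMk (r K) = K := by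
    intro K
    by_cases hK : ∃ i, (G.connectedComponentMk ∘ p) i = K
    · obtain ⟨i, rfl⟩ := hK
      exact congrArg _ (hrp i)
    · exact (congrArg _ (Function.extend_apply' _ _ _ hK)).trans (Quot.out_eq K)
  have hcompl : (Set.range r)ᶜ = ⋃ K, K.supp \ {r K} := by
    ext x
    simp only [Set.mem_compl_iff, Set.mem_range, not_exists, Set.mem_iUnion, Set.mem_sdiff,
      Set.mem_singleton_iff, ConnectedComponent.mem_supp_iff]
    constructor
    · exact fun h => ⟨_, rfl, fun hx => h _ hx.symm⟩
    · rintro ⟨K, rfl, hx⟩ K' rfl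
      exact hx (by rw [hr])
  refine ⟨Set.range r, ?_, Set.ncard_range_of_injective (Function.LeftInverse.injective hr), ?_⟩
  · rintro _ ⟨i, rfl⟩
    exact ⟨_, hrp i⟩
  · rw [hcompl]
    exact PerfectlyMatchable.iUnion (fun K => hfc K _ (hr K)) fun K K' hKK' =>
      (G.pairwise_disjoint_supp_connectedComponent hKK').mono Set.sdiff_subset Set.sdiff_subset

theorem le_two_mul_matchNum_add_card_connectedComponent [Finite V] {A C D : Set V}
    (hAD : Disjoint A D) (hCA : Disjoint C A) (hCD : Disjoint C D)
    (hfc : ∀ K : (G.induce D).ConnectedComponent, ∀ v ∈ K.supp,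
      (G.induce D).PerfectlyMatchable (K.supp \ {v}))
    (hC : G.PerfectlyMatchable C) {p : A → D} (hp : ∀ a : A, G.Adj a (p a))
    (hpinj : Function.Injective ((G.induce D).connectedComponentMk ∘ p)) :
    C.ncard + 2 * A.ncard + D.ncard ≤
      2 * matchNum G + Nat.card (G.induce D).ConnectedComponent := by
  obtain ⟨R, hpR, hRcard, hR⟩ := exists_perfectlyMatchable_compl hfc hpinj
  have hfinj : Function.Injective (Subtype.val ∘ p) :=
    Subtype.val_injective.comp hpinj.of_comp
  have hrange : Set.range (Subtype.val ∘ p) ⊆ Subtype.val '' R := by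
    rw [Set.range_comp]
    exact Set.image_mono hpR
  have hAp : Disjoint A (Set.range (Subtype.val ∘ p)) :=
    hAD.mono_right (hrange.trans (Subtype.coe_image_subset D R))
  have hApR : Disjoint (A ∪ Set.range (Subtype.val ∘ p)) (Subtype.val '' Rᶜ) :=
    Disjoint.union_left (hAD.mono_right (Subtype.coe_image_subset D _))
      (Disjoint.mono_left hrange ((Set.disjoint_image_iff Subtype.val_injective).mpr
        disjoint_compl_right))
  have hCApR : Disjoint C ((A ∪ Set.range (Subtype.val ∘ p)) ∪ Subtype.val '' Rᶜ) :=
    Disjoint.union_right (Disjoint.union_right hCA (hCD.mono_right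
      (Set.range_subset_iff.mpr fun a => (p a).2)))
      (hCD.mono_right (Subtype.coe_image_subset D _))
  have hle := (hC.union ((perfectlyMatchable_union_range hfinj hAp hp).union hR.image_val
    hApR) hCApR).ncard_le_two_mul_matchNum
  rw [Set.ncard_union_eq hCApR, Set.ncard_union_eq hApR, Set.ncard_union_eq hAp,
    Set.ncard_range_of_injective hfinj, Nat.card_coe_set_eq,
    Set.ncard_image_of_injective _ Subtype.val_injective] at hle
  have hsplit := Set.ncard_add_ncard_compl R
  rw [hRcard, Nat.card_coe_set_eq] at hsplit
  omega

theorem ConnectedComponent.exists_unmatched_or_matched_into [Finite V] {M : G.Subgraph}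
    (hM : M.IsMatching) {U S : Set V} (hUS : ∀ u ∈ U, ∀ x ∉ U, G.Adj u x → x ∈ S)
    (K : (G.induce U).ConnectedComponent) (hK : Odd K.supp.ncard) :
    ∃ u ∈ K.supp, (u : V) ∉ M.verts ∨ ∃ s ∈ S, M.Adj u s := by
  by_contra! h
  have hclosed : ∀ u ∈ Subtype.val '' K.supp, ∀ w, M.Adj u w → w ∈ Subtype.val '' K.supp := by
    rintro _ ⟨u, hu, rfl⟩ w huw
    have hwU : w ∈ U := by
      by_contra hwU
      exact (h u hu).2 w (hUS u u.2 w hwU (M.adj_sub huw)) huw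
    refine ⟨⟨w, hwU⟩, ?_, rfl⟩
    rw [ConnectedComponent.mem_supp_iff] at hu ⊢
    rw [← hu]
    exact ConnectedComponent.connectedComponentMk_eq_of_adj (M.adj_sub huw).symm
  have heven := hM.even_ncard_of_forall_adj_mem
    (by rintro _ ⟨u, hu, rfl⟩; exact (h u hu).1) hclosed
  rw [Set.ncard_image_of_injective _ Subtype.val_injective] at heven
  exact Nat.not_even_iff_odd.mpr hK heven

theorem card_connectedComponent_induce_le [Finite V] {M : G.Subgraph}
    (hM : M.IsMatching) {U S : Set V} (hUS : ∀ u ∈ U, ∀ x ∉ U, G.Adj u x → x ∈ S)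
    (hodd : ∀ K : (G.induce U).ConnectedComponent, Odd K.supp.ncard) :
    Nat.card (G.induce U).ConnectedComponent ≤ M.vertsᶜ.ncard + S.ncard := by
  let Witness (u : U) : ↥M.vertsᶜ ⊕ S → Prop :=
    Sum.elim (fun x => (u : V) = x) (fun s => M.Adj u s)
  have hwit : ∀ K : (G.induce U).ConnectedComponent, ∃ x, ∃ u ∈ K.supp, Witness u x := by
    intro K
    obtain ⟨u, hu, hfree | ⟨s, hs, hus⟩⟩ := K.exists_unmatched_or_matched_into hM hUS (hodd K)
    exacts [⟨.inl ⟨u, hfree⟩, u, hu, rfl⟩, ⟨.inr ⟨s, hs⟩, u, hu, hus⟩]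
  have hunique : ∀ {x u u'}, Witness u x → Witness u' x → u = u' := by
    rintro (x | s) u u' h h'
    exacts [Subtype.ext (h.trans h'.symm), Subtype.ext (hM.eq_of_adj_right h h')]
  choose w hw using hwit
  have hinj : Function.Injective w := by
    intro K K' hKK'
    obtain ⟨u, hu, huw⟩ := hw K
    obtain ⟨u', hu', huw'⟩ := hw K'
    rw [← hKK'] at huw'
    rw [← hu, ← hu', hunique huw huw']
  simpa [Nat.card_sum, Nat.card_coe_set_eq] using Nat.card_le_card_of_injective w hinj

end SimpleGraph

/-- The matching-number formula of the Gallai–Edmonds Structure Theorem: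
`ν(H) = |A| + |C|/2 + Σᵢ (cᵢ - 1)/2`, the last sum written as `(|D| - t)/2` where `t`
is the number of components of `H[D]` (all of odd order, being factor-critical). -/
theorem stmt18 {V : Type*} [Fintype V] (H : SimpleGraph V) :
    let D : Set V := {v | ∃ M : H.Subgraph, M.IsMatching ∧
      M.edgeSet.ncard = matchNum H ∧ v ∉ M.verts}
    let A : Set V := {v | v ∉ D ∧ ∃ u ∈ D, H.Adj v u}
    let C : Set V := (Set.univ \ D) \ A
    (∀ K : (H.induce D).ConnectedComponent, ∀ v : D, v ∈ K.supp →
      ∃ M : (H.induce D).Subgraph, M.IsMatching ∧ M.verts = K.supp \ {v}) →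
    (∃ M : (H.induce C).Subgraph, M.IsPerfectMatching) →
    (∀ M : H.Subgraph, M.IsMatching → M.edgeSet.ncard = matchNum H →
      (∀ a ∈ A, ∃ b ∈ D, M.Adj a b) ∧
      (∀ a ∈ A, ∀ a' ∈ A, a ≠ a' → ∀ b b' (hb : b ∈ D) (hb' : b' ∈ D),
        M.Adj a b → M.Adj a' b' →
        ¬ (H.induce D).Reachable ⟨b, hb⟩ ⟨b', hb'⟩)) →
    matchNum H = A.ncard + C.ncard / 2 +
      (D.ncard - Nat.card ((H.induce D).ConnectedComponent)) / 2 := by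
  intro D A C hfc hC hmax
  obtain ⟨M, hM, hMν⟩ := H.exists_isMatching_ncard_edgeSet_eq_matchNum
  obtain ⟨hAmatched, hAseparated⟩ := hmax M hM hMν
  have hpartner (a : A) : ∃ b : D, M.Adj a b :=
    let ⟨b, hb, hab⟩ := hAmatched a a.2
    ⟨⟨b, hb⟩, hab⟩
  choose p hp using hpartner
  have hpinj : Function.Injective ((H.induce D).connectedComponentMk ∘ p) := fun a a' h =>
    by_contra fun hne => hAseparated a a.2 a' a'.2 (Subtype.coe_ne_coe.mpr hne) _ _ (p a).2
      (p a').2 (hp a) (hp a') (ConnectedComponent.exact h)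
  have hCmatch : H.PerfectlyMatchable C := by
    obtain ⟨MC, hMC⟩ := hC
    simpa using PerfectlyMatchable.image_val ⟨MC, hMC.1, hMC.2.verts_eq_univ⟩
  have hlower := le_two_mul_matchNum_add_card_connectedComponent
    (Set.disjoint_left.mpr fun _ ha => ha.1) (Set.disjoint_left.mpr fun _ hc => hc.2)
    (Set.disjoint_left.mpr fun _ hc => hc.1.2) hfc hCmatch (fun a => M.adj_sub (hp a)) hpinj
  have hupper := card_connectedComponent_induce_le hM (S := A)
    (fun u hu x hx hux => ⟨hx, u, hu, hux.symm⟩) fun K =>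
      let ⟨v, hv⟩ := K.nonempty_supp
      PerfectlyMatchable.odd_ncard_of_sdiff_singleton hv (hfc K v hv)
  have hcomponents := (H.induce D).card_connectedComponent_le
  rw [Nat.card_coe_set_eq] at hcomponents
  have hpartition : A.ncard + C.ncard + D.ncard = Nat.card V :=
    Set.ncard_add_ncard_sdiff_add_ncard (Set.disjoint_left.mpr fun _ ha => ha.1)
  have hverts := Set.ncard_add_ncard_compl M.verts
  rw [hM.ncard_verts, hMν] at hverts
  obtain ⟨c, hc⟩ := hCmatch.even_ncard
  omega
end
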